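/- arXiv:math-ph/0511036 — 3 statements merged into one kernel-verified Lean document; each statement's English description precedes it below -/
import Mathlib

section
/- Every irreducible finite-dimensional complex representation of the Heisenberg group H(V,ω) whose central character is the nontrivial character ψ has dimension exactly q^n. -/
/-!
Dimension of the Heisenberg representation of the Heisenberg group `H(V,ω)` attached to a
`2n`-dimensional symplectic vector space `(V,ω)` over a finite field `F` of odd
cardinality `q`, with a fixed nontrivial additive character `ψ : F → ℂ×`:
there exists an irreducible finite-dimensional complex representation with
central character `ψ`, and any two such are isomorphic.
-/

noncomputable section
set_option linter.unusedSectionVars false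

namespace KRSup

variable (F V : Type) [Field F] [Fintype F] [AddCommGroup V] [Module F V]

/-- Heisenberg group multiplication on `H = V × F`:
`(v,z)·(v',z') = (v+v', z+z'+½ω(v,v'))`. -/
def hMul (ω : LinearMap.BilinForm F V) (h h' : V × F) : V × F :=
  (h.1 + h'.1, h.2 + h'.2 + (2 : F)⁻¹ * ω h.1 h'.1)

/-- An irreducible finite-dimensional complex representation of the Heisenberg group
`H(V,ω)` with central character `ψ`. -/
structure HeisenbergRep (ω : LinearMap.BilinForm F V) (ψ : AddChar F ℂ) where
  /-- the underlying complex vector space -/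
  carrier : Type
  [acg : AddCommGroup carrier]
  [mod : Module ℂ carrier]
  [fd : FiniteDimensional ℂ carrier]
  /-- the action of the Heisenberg group -/
  π : V × F → (carrier →ₗ[ℂ] carrier)
  π_mul : ∀ h h' : V × F, π (hMul F V ω h h') = (π h).comp (π h')
  π_one : π ((0 : V), (0 : F)) = LinearMap.id
  nontriv : ∃ w : carrier, w ≠ 0
  /-- the restriction to the center `Z(H) = {(0,z)}` acts by the character `ψ` -/
  central : ∀ z : F, π ((0 : V), z) = ψ z • LinearMap.id
  /-- irreducibility: no nontrivial invariant subspaces -/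
  irred : ∀ U : Submodule ℂ carrier, (∀ h : V × F, ∀ w ∈ U, π h w ∈ U) → U = ⊥ ∨ U = ⊤

attribute [instance] HeisenbergRep.acg HeisenbergRep.mod HeisenbergRep.fd

section Aux
variable {F V : Type} [Field F] [Fintype F] [AddCommGroup V] [Module F V]
variable {ω : LinearMap.BilinForm F V} {ψ : AddChar F ℂ} (P : HeisenbergRep F V ω ψ)

/-- The operators `T v = π(v,0)`. -/
def T (v : V) : P.carrier →ₗ[ℂ] P.carrier := P.π (v, 0)

lemma T_zero : T P 0 = LinearMap.id := P.π_one

lemma pi_eq (v : V) (z : F) : P.π (v, z) = ψ z • T P v := by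
  have h := P.π_mul (v, 0) (0, z)
  have : hMul F V ω (v, 0) (0, z) = (v, z) := by
    simp [hMul]
  rw [this] at h
  rw [h, T, P.central z]
  ext w
  simp

lemma T_mul (v u : V) : (T P v).comp (T P u) = ψ ((2:F)⁻¹ * ω v u) • T P (v + u) := by
  have h := P.π_mul (v, 0) (u, 0)
  have e : hMul F V ω (v, 0) (u, 0) = (v + u, (2:F)⁻¹ * ω v u) := by
    simp [hMul]
  rw [e, pi_eq] at h
  exact h.symm

lemma skew (halt : ∀ v : V, ω v v = 0) (v u : V) : ω v u = - ω u v := by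
  have h := halt (v + u)
  simp [map_add, LinearMap.add_apply, halt v, halt u] at h
  linear_combination h
  

lemma two_ne (hq : Odd (Fintype.card F)) : (2:F) ≠ 0 := by
  intro h
  have hd : ringChar F ∣ 2 := ringChar.dvd (by exact_mod_cast h)
  have hp : (ringChar F).Prime := CharP.char_is_prime F (ringChar F)
  have hchar : ringChar F = 2 := (Nat.prime_dvd_prime_iff_eq hp Nat.prime_two).mp hd
  have h2 := FiniteField.even_card_of_char_two hchar
  obtain ⟨k, hk⟩ := hq
  omega

lemma psi_ne_zero (a : F) : ψ a ≠ 0 := by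
  intro h
  have : ψ a * ψ (-a) = 1 := by
    rw [← AddChar.map_add_eq_mul]; simp
  rw [h, zero_mul] at this
  exact zero_ne_one this

lemma T_comp_neg (halt : ∀ v : V, ω v v = 0) (v : V) :
    (T P v).comp (T P (-v)) = LinearMap.id := by
  rw [T_mul]
  have h1 : ω v (-v) = 0 := by simp [halt v]
  rw [h1, mul_zero, AddChar.map_zero_eq_one, add_neg_cancel, T_zero, one_smul]

lemma surj_pair (halt : ∀ v : V, ω v v = 0)
    (hnd : ∀ v : V, (∀ u : V, ω v u = 0) → v = 0)
    {v : V} (hv : v ≠ 0) : Function.Surjective (fun u => ω u v) := by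
  have hne : ∃ u, ω u v ≠ 0 := by
    by_contra hc
    push_neg at hc
    exact hv (hnd v (fun u => by rw [skew halt v u, hc u, neg_zero]))
  obtain ⟨u₀, hu₀⟩ := hne
  intro z
  refine ⟨(z / ω u₀ v) • u₀, ?_⟩
  simp only [map_smul, LinearMap.smul_apply, smul_eq_mul]
  field_simp


open LinearMap in
lemma Tm (v u : V) : T P v * T P u = ψ ((2:F)⁻¹ * ω v u) • T P (v + u) := T_mul P v u

lemma Tm_one : T P 0 = 1 := T_zero P

lemma Tm_inv (halt : ∀ v : V, ω v v = 0) (v : V) : T P v * T P (-v) = 1 := T_comp_neg P halt v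

/-- Character sum over `V` against a pairing with a nonzero vector vanishes. -/
lemma sum_psi_pair [Fintype V] (halt : ∀ v : V, ω v v = 0)
    (hnd : ∀ v : V, (∀ u : V, ω v u = 0) → v = 0)
    (hψ : ψ ≠ 1) {v : V} (hv : v ≠ 0) :
    ∑ u : V, ψ (ω u v) = 0 := by
  have hsurj := surj_pair halt hnd hv
  let f : V →+ F := (ω.flip v).toAddMonoidHom
  have hf : ∀ u, f u = ω u v := fun u => rfl
  have hne : ψ.compAddMonoidHom f ≠ 0 := by
    obtain ⟨z, hz⟩ := AddChar.ne_one_iff.mp hψ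
    obtain ⟨u, hu⟩ := hsurj z
    intro hc
    apply hz
    have := congrArg (fun χ => χ u) hc
    simpa [hf, hu] using this
  have hsum := AddChar.sum_eq_zero_iff_ne_zero.mpr hne
  calc ∑ u : V, ψ (ω u v) = ∑ u : V, (ψ.compAddMonoidHom f) u := by
        refine Finset.sum_congr rfl fun u _ => ?_
        simp [hf]
    _ = 0 := hsum

/-- The trace of `T v` vanishes for `v ≠ 0`. -/
lemma trace_T_eq_zero [Fintype V] (halt : ∀ v : V, ω v v = 0)
    (hnd : ∀ v : V, (∀ u : V, ω v u = 0) → v = 0)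
    (h2 : (2:F) ≠ 0) (hψ : ψ ≠ 1) {v : V} (hv : v ≠ 0) :
    LinearMap.trace ℂ P.carrier (T P v) = 0 := by
  obtain ⟨z, hz⟩ := AddChar.ne_one_iff.mp hψ
  obtain ⟨u, hu⟩ := surj_pair halt hnd hv z
  simp only at hu
  by_contra ht
  have key := LinearMap.trace_mul_comm ℂ (T P u) (T P (v - u))
  rw [Tm, Tm] at key
  have e1 : ω u (v - u) = ω u v := by simp [halt u]
  have e2 : ω (v - u) u = - ω u v := by
    rw [skew halt (v - u) u, e1]
  rw [e1] at key
  have e3 : v - u + u = v := by abel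
  have e4 : u + (v - u) = v := by abel
  rw [e2, e3, e4] at key
  simp only [map_smul, smul_eq_mul] at key
  have hcan : ψ ((2:F)⁻¹ * ω u v) = ψ ((2:F)⁻¹ * -(ω u v)) :=
    mul_right_cancel₀ ht key
  apply hz
  have : ψ ((2:F)⁻¹ * ω u v) * ψ ((2:F)⁻¹ * ω u v) =
      ψ ((2:F)⁻¹ * -(ω u v)) * ψ ((2:F)⁻¹ * ω u v) := by rw [hcan]
  rw [← AddChar.map_add_eq_mul, ← AddChar.map_add_eq_mul] at this
  have harith : (2:F)⁻¹ * ω u v + (2:F)⁻¹ * ω u v = ω u v := by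
    field_simp
    ring
  have harith2 : (2:F)⁻¹ * -(ω u v) + (2:F)⁻¹ * ω u v = 0 := by ring
  rw [harith, harith2, AddChar.map_zero_eq_one] at this
  rw [← hu]
  exact this

/-- Schur's lemma: an operator commuting with all `T v` is scalar. -/
lemma schur (C : P.carrier →ₗ[ℂ] P.carrier)
    (hcomm : ∀ v : V, C * T P v = T P v * C) :
    ∃ c : ℂ, C = c • (1 : P.carrier →ₗ[ℂ] P.carrier) := by
  haveI : Nontrivial P.carrier := by
    obtain ⟨w, hw⟩ := P.nontriv
    exact ⟨w, 0, hw⟩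
  obtain ⟨c, hc⟩ := Module.End.exists_eigenvalue (C : Module.End ℂ P.carrier)
  refine ⟨c, ?_⟩
  set U : Submodule ℂ P.carrier := Module.End.eigenspace (C : Module.End ℂ P.carrier) c with hUdef
  have hinv : ∀ h : V × F, ∀ w ∈ U, P.π h w ∈ U := by
    rintro ⟨v, z⟩ w hw
    rw [Module.End.mem_eigenspace_iff] at hw ⊢
    rw [pi_eq]
    have hCT : C (T P v w) = T P v (C w) := by
      have := congrArg (fun (B : P.carrier →ₗ[ℂ] P.carrier) => B w) (hcomm v)
      simpa using this
    simp only [LinearMap.smul_apply, map_smul]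
    rw [hCT, hw, map_smul]
    rw [smul_comm]
  rcases P.irred U hinv with hbot | htop
  · exact absurd hbot (Module.End.hasEigenvalue_iff.mp hc)
  · ext w
    have hw : w ∈ U := htop ▸ Submodule.mem_top
    rw [Module.End.mem_eigenspace_iff] at hw
    simpa using hw


lemma trace_one' : LinearMap.trace ℂ P.carrier (1 : P.carrier →ₗ[ℂ] P.carrier)
    = (Module.finrank ℂ P.carrier : ℂ) := LinearMap.trace_one ℂ P.carrier

lemma finrank_ne_zero' : (Module.finrank ℂ P.carrier : ℂ) ≠ 0 := by
  haveI : Nontrivial P.carrier := by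
    obtain ⟨w, hw⟩ := P.nontriv
    exact ⟨w, 0, hw⟩
  exact Nat.cast_ne_zero.mpr Module.finrank_pos.ne'

lemma T_indep [Fintype V] (halt : ∀ v : V, ω v v = 0)
    (hnd : ∀ v : V, (∀ u : V, ω v u = 0) → v = 0)
    (h2 : (2:F) ≠ 0) (hψ : ψ ≠ 1) : LinearIndependent ℂ (T P) := by
  rw [Fintype.linearIndependent_iff]
  intro c hc u
  have tr0 : ∀ v, v ≠ u → LinearMap.trace ℂ P.carrier (T P v * T P (-u)) = 0 := by
    intro v hvu
    have hvz : v + -u ≠ 0 := by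
      rw [← sub_eq_add_neg]
      exact sub_ne_zero_of_ne hvu
    rw [Tm P v (-u), map_smul, trace_T_eq_zero P halt hnd h2 hψ hvz, smul_zero]
  have happ := congrArg (fun B : P.carrier →ₗ[ℂ] P.carrier =>
    LinearMap.trace ℂ P.carrier (B * T P (-u))) hc
  simp only [Finset.sum_mul, smul_mul_assoc, map_sum, map_smul, zero_mul, map_zero] at happ
  rw [Finset.sum_eq_single u (fun v _ hvu => by rw [tr0 v hvu, smul_zero])
    (fun h => absurd (Finset.mem_univ u) h)] at happ
  rw [Tm_inv P halt u, trace_one' P] at happ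
  simp only [smul_eq_mul] at happ
  exact (mul_eq_zero.mp happ).resolve_right (finrank_ne_zero' P)

/-- The twisted average operator. -/
def Phi [Fintype V] (u : V) (B : P.carrier →ₗ[ℂ] P.carrier) : P.carrier →ₗ[ℂ] P.carrier :=
  ∑ v : V, ψ (ω u v) • (T P v * B * T P (-v))

lemma conj_one (halt : ∀ v : V, ω v v = 0) (w v : V) (B : P.carrier →ₗ[ℂ] P.carrier) :
    T P w * (T P v * B * T P (-v)) * T P (-w) = T P (w + v) * B * T P (-(w + v)) := by
  have e : T P w * (T P v * B * T P (-v)) * T P (-w)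
      = (T P w * T P v) * B * (T P (-v) * T P (-w)) := by noncomm_ring
  rw [e, Tm, Tm]
  have h1 : ω (-v) (-w) = ω v w := by simp
  have h2 : (-v) + (-w) = -(w + v) := by abel
  rw [h1, h2]
  simp only [smul_mul_assoc, mul_smul_comm, smul_smul]
  rw [← AddChar.map_add_eq_mul]
  have h3 : (2:F)⁻¹ * ω v w + (2:F)⁻¹ * ω w v = 0 := by
    rw [skew halt v w]; ring
  rw [h3, AddChar.map_zero_eq_one, one_smul]

lemma twist [Fintype V] (halt : ∀ v : V, ω v v = 0) (u w : V)
    (B : P.carrier →ₗ[ℂ] P.carrier) :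
    T P w * Phi P u B = ψ (- ω u w) • (Phi P u B * T P w) := by
  have key : T P w * Phi P u B * T P (-w) = ψ (- ω u w) • Phi P u B := by
    unfold Phi
    rw [Finset.mul_sum, Finset.sum_mul, Finset.smul_sum]
    refine Fintype.sum_equiv (Equiv.addLeft w) _ _ fun v => ?_
    rw [mul_smul_comm, smul_mul_assoc, conj_one P halt w v B]
    have he : (Equiv.addLeft w) v = w + v := rfl
    rw [he, smul_smul, ← AddChar.map_add_eq_mul]
    congr 2
    rw [map_add]
    ring
  have hmul := congrArg (fun X => X * T P w) key
  simp only [smul_mul_assoc] at hmul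
  rw [mul_assoc] at hmul
  have hinv : T P (-w) * T P w = 1 := by
    have := Tm_inv P halt (-w)
    rwa [neg_neg] at this
  rw [hinv, mul_one] at hmul
  exact hmul


lemma phi_scalar [Fintype V] (halt : ∀ v : V, ω v v = 0) (h2 : (2:F) ≠ 0) (u : V)
    (B : P.carrier →ₗ[ℂ] P.carrier) : ∃ c : ℂ, Phi P u B = c • T P u := by
  have hcomm : ∀ w : V, (Phi P u B * T P (-u)) * T P w = T P w * (Phi P u B * T P (-u)) := by
    intro w
    rw [mul_assoc, Tm P (-u) w]
    rw [← mul_assoc (T P w), twist P halt u w B, smul_mul_assoc, mul_assoc, Tm P w (-u)]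
    simp only [mul_smul_comm, smul_smul]
    rw [show (-u + w) = w + -u from by abel]
    congr 1
    rw [← AddChar.map_add_eq_mul]
    congr 1
    have e1 : ω (-u) w = - ω u w := by simp
    have e2 : ω w (-u) = ω u w := by rw [map_neg, skew halt w u, neg_neg]
    rw [e1, e2]
    field_simp
    ring
  obtain ⟨c, hc⟩ := schur P (Phi P u B * T P (-u)) hcomm
  refine ⟨c, ?_⟩
  have hinv : T P (-u) * T P u = 1 := by
    have := Tm_inv P halt (-u); rwa [neg_neg] at this
  calc Phi P u B = Phi P u B * (T P (-u) * T P u) := by rw [hinv, mul_one]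
    _ = (Phi P u B * T P (-u)) * T P u := by rw [mul_assoc]
    _ = (c • 1) * T P u := by rw [hc]
    _ = c • T P u := by rw [smul_mul_assoc, one_mul]

lemma sum_phi [Fintype V] (halt : ∀ v : V, ω v v = 0)
    (hnd : ∀ v : V, (∀ u : V, ω v u = 0) → v = 0) (hψ : ψ ≠ 1)
    (B : P.carrier →ₗ[ℂ] P.carrier) :
    ∑ u : V, Phi P u B = (Fintype.card V : ℂ) • B := by
  unfold Phi
  rw [Finset.sum_comm]
  have hterm : ∀ v : V, ∑ u : V, ψ (ω u v) • (T P v * B * T P (-v))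
      = (∑ u : V, ψ (ω u v)) • (T P v * B * T P (-v)) := by
    intro v
    rw [Finset.sum_smul]
  calc ∑ v : V, ∑ u : V, ψ (ω u v) • (T P v * B * T P (-v))
      = ∑ v : V, (∑ u : V, ψ (ω u v)) • (T P v * B * T P (-v)) := by
        exact Finset.sum_congr rfl fun v _ => hterm v
    _ = (Fintype.card V : ℂ) • B := by
        rw [Finset.sum_eq_single (0 : V)]
        · have : ∀ u : V, ψ (ω u (0:V)) = 1 := fun u => by simp
          rw [Finset.sum_congr rfl (fun u _ => this u)]
          rw [Tm_one, one_mul, neg_zero, Tm_one, mul_one]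
          simp [Finset.card_univ]
        · intro v _ hv
          rw [sum_psi_pair halt hnd hψ hv, zero_smul]
        · intro h
          exact absurd (Finset.mem_univ 0) h

lemma T_span [Fintype V] (halt : ∀ v : V, ω v v = 0)
    (hnd : ∀ v : V, (∀ u : V, ω v u = 0) → v = 0)
    (h2 : (2:F) ≠ 0) (hψ : ψ ≠ 1) :
    ⊤ ≤ Submodule.span ℂ (Set.range (T P)) := by
  intro B _
  have hcard : (Fintype.card V : ℂ) ≠ 0 := Nat.cast_ne_zero.mpr Fintype.card_ne_zero
  have hB : B = (Fintype.card V : ℂ)⁻¹ • ∑ u : V, Phi P u B := by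
    rw [sum_phi P halt hnd hψ B, smul_smul, inv_mul_cancel₀ hcard, one_smul]
  rw [hB]
  refine Submodule.smul_mem _ _ (Submodule.sum_mem _ fun u _ => ?_)
  obtain ⟨c, hc⟩ := phi_scalar P halt h2 u B
  rw [hc]
  exact Submodule.smul_mem _ _ (Submodule.subset_span ⟨u, rfl⟩)

end Aux

/-- Every irreducible finite-dimensional complex representation of the Heisenberg group
`H(V,ω)` with (nontrivial) central character `ψ` has dimension exactly `q^n`,
where `q` is the cardinality of the finite field `F`. -/
theorem heisenberg_rep_dim
    (n : ℕ) [FiniteDimensional F V] (hdim : Module.finrank F V = 2 * n)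
    (hq : Odd (Fintype.card F))
    (ω : LinearMap.BilinForm F V)
    (halt : ∀ v : V, ω v v = 0)
    (hnd : ∀ v : V, (∀ u : V, ω v u = 0) → v = 0)
    (ψ : AddChar F ℂ) (hψ : ψ ≠ 1)
    (P : HeisenbergRep F V ω ψ) :
    Module.finrank ℂ P.carrier = Fintype.card F ^ n := by
  have h2 : (2:F) ≠ 0 := two_ne hq
  haveI : Finite V := Module.finite_of_finite F
  haveI : Fintype V := Fintype.ofFinite V
  have hindep := T_indep P halt hnd h2 hψ
  have hspan := T_span P halt hnd h2 hψ
  have h1 : Module.finrank ℂ (P.carrier →ₗ[ℂ] P.carrier) = Fintype.card V := by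
    rw [Module.finrank_eq_card_basis (Module.Basis.mk hindep hspan)]
  have hEnd : Module.finrank ℂ (P.carrier →ₗ[ℂ] P.carrier)
      = Module.finrank ℂ P.carrier * Module.finrank ℂ P.carrier :=
    Module.finrank_linearMap ℂ ℂ P.carrier P.carrier
  have hV : Fintype.card V = Fintype.card F ^ (2 * n) := by
    rw [Module.card_eq_pow_finrank (K := F) (V := V), hdim]
  have key : Module.finrank ℂ P.carrier ^ 2 = (Fintype.card F ^ n) ^ 2 := by
    rw [pow_two, ← hEnd, h1, hV, ← pow_mul]
    ring_nf
  exact Nat.pow_left_injective (two_ne_zero) key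


end KRSup
end
end

section
/- For any two enhanced Lagrangians L° = (L,σ_L) and M° = (M,σ_M), every intertwining operator F ∈ Hom_{H(V,ω)}(H_{L°}, H_{M°}) is proportional to the averaging operator, i.e., there exists g_F ∈ ℂ such that F(f)(h) = g_F · Σ_{m ∈ M} f((m,0)·h) for all f ∈ H_{L°} and h ∈ H. -/
/-!
Every intertwining operator `F ∈ Hom_{H(V,ω)}(H_{L°}, H_{M°})` between two models of
the Heisenberg representation is proportional to the averaging operator
`f ↦ (h ↦ Σ_{m ∈ M} f((m,0)·h))`.
-/

noncomputable section
set_option linter.unusedSectionVars false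
set_option synthInstance.maxHeartbeats 1000000
set_option maxHeartbeats 1000000

namespace KRSup

variable (F V : Type) [Field F] [Fintype F] [AddCommGroup V] [Module F V]

variable {F V}

lemma hMul_assoc (ω : LinearMap.BilinForm F V) (h₁ h₂ h₃ : V × F) :
    hMul F V ω (hMul F V ω h₁ h₂) h₃ = hMul F V ω h₁ (hMul F V ω h₂ h₃) := by
  simp only [hMul, Prod.mk.injEq, map_add, LinearMap.add_apply]
  exact ⟨add_assoc _ _ _, by ring⟩

variable (F V)

/-- The model `H_{L°}`: the space of functions `f : H → ℂ` with
`f((l,z)·h) = ψ(z)·f(h)` for all `l ∈ L`, `z ∈ F`. -/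
def model (ω : LinearMap.BilinForm F V) (ψ : AddChar F ℂ) (L : Submodule F V) :
    Submodule ℂ ((V × F) → ℂ) where
  carrier := {f | ∀ l ∈ L, ∀ z : F, ∀ h : V × F, f (hMul F V ω (l, z) h) = ψ z * f h}
  add_mem' := by
    intro f g hf hg l hl z h
    simp only [Pi.add_apply, hf l hl z h, hg l hl z h, mul_add]
  zero_mem' := by intro l hl z h; simp
  smul_mem' := by
    intro c f hf l hl z h
    simp only [Pi.smul_apply, smul_eq_mul, hf l hl z h]
    ring

/-- Right translation by `h₀` on functions on the Heisenberg group. -/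
def rtrans (ω : LinearMap.BilinForm F V) (h₀ : V × F) :
    ((V × F) → ℂ) →ₗ[ℂ] ((V × F) → ℂ) where
  toFun f := fun h => f (hMul F V ω h h₀)
  map_add' _ _ := rfl
  map_smul' _ _ := rfl

lemma rtrans_mem (ω : LinearMap.BilinForm F V) (ψ : AddChar F ℂ) (L : Submodule F V)
    (h₀ : V × F) {f : (V × F) → ℂ} (hf : f ∈ model F V ω ψ L) :
    rtrans F V ω h₀ f ∈ model F V ω ψ L := by
  intro l hl z h
  show f (hMul F V ω (hMul F V ω (l, z) h) h₀) = ψ z * f (hMul F V ω h h₀)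
  rw [hMul_assoc]
  exact hf l hl z _

/-- The Heisenberg representation `π_{L°}` on the model `H_{L°}`, by right translation. -/
def heisAction (ω : LinearMap.BilinForm F V) (ψ : AddChar F ℂ) (L : Submodule F V)
    (h₀ : V × F) : ↥(model F V ω ψ L) →ₗ[ℂ] ↥(model F V ω ψ L) :=
  (rtrans F V ω h₀).restrict (fun _ hf => rtrans_mem F V ω ψ L h₀ hf)

/-- An enhanced Lagrangian `(L, σ_L)`: a Lagrangian subspace `L ⊂ V` together with a
nonzero element `σ_L` of the `n`-th exterior power `ΛⁿL` (realized inside the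
exterior algebra of `V` as the `n`-th power of the image of `L`). -/
structure EnhLag (ω : LinearMap.BilinForm F V) (n : ℕ) where
  /-- the Lagrangian subspace -/
  L : Submodule F V
  isotropic : ∀ x ∈ L, ∀ y ∈ L, ω x y = 0
  dim : Module.finrank F ↥L = n
  /-- the enhancement `σ_L ∈ ΛⁿL`, `σ_L ≠ 0` -/
  σ : ExteriorAlgebra F V
  σ_mem : σ ∈ (Submodule.map (ExteriorAlgebra.ι F) L) ^ n
  σ_ne : σ ≠ 0

/-- The space of intertwining operators `Hom_{H(V,ω)}(H_{L°}, H_{M°})`: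
linear maps commuting with the right-translation action of the Heisenberg group. -/
def intertwiners (ω : LinearMap.BilinForm F V) (ψ : AddChar F ℂ) (M L : Submodule F V) :
    Submodule ℂ (↥(model F V ω ψ L) →ₗ[ℂ] ↥(model F V ω ψ M)) where
  carrier := {T | ∀ h₀ : V × F,
    T ∘ₗ heisAction F V ω ψ L h₀ = heisAction F V ω ψ M h₀ ∘ₗ T}
  add_mem' := by
    intro T S hT hS h₀
    simp only [LinearMap.add_comp, LinearMap.comp_add, hT h₀, hS h₀]
  zero_mem' := by intro h₀; simp
  smul_mem' := by
    intro c T hT h₀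
    simp only [LinearMap.smul_comp, LinearMap.comp_smul, hT h₀]

open scoped Classical

/-!
Evaluating at the identity turns an intertwiner `T` into the functional `φ = ev ∘ T` on
`H_{L°}`, which is invariant under `(m, 0)`, `m ∈ M`, and recovers `T` as
`T f h = φ (π(h) f)`. Such invariant functionals form a line. Indeed the translates
`π(u, 0) Δ` of the function `Δ` supported on `L̃` span `H_{L°}`, and `π(u, 0) Δ` is an
eigenvector of `π(m, 0)`, `m ∈ M ∩ L`, with eigenvalue `ψ(ω(m, u))`. So an invariant
functional kills it unless `ω(M ∩ L, u) = 0`, i.e. `u ∈ (M ∩ L)^⊥ = M^⊥ + L^⊥ = M + L`,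
and there its value is a multiple of its value at `Δ`. The averaging functional is
invariant and does not vanish at `Δ`.
-/

section Lagrangian

variable {K W : Type*} [Field K] [AddCommGroup W] [Module K W] {B : LinearMap.BilinForm K W}

lemma _root_.LinearMap.BilinForm.orthogonal_sup (B : LinearMap.BilinForm K W)
    (L M : Submodule K W) :
    B.orthogonal (L ⊔ M) = B.orthogonal L ⊓ B.orthogonal M := by
  refine le_antisymm (le_inf (B.orthogonal_le le_sup_left) (B.orthogonal_le le_sup_right)) ?_
  rintro x ⟨hxL, hxM⟩
  refine B.mem_orthogonal_iff.2 fun y hy => ?_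
  obtain ⟨l, hl, m, hm, rfl⟩ := Submodule.mem_sup.1 hy
  have hl' : B l x = 0 := (B.mem_orthogonal_iff.1 hxL) l hl
  have hm' : B m x = 0 := (B.mem_orthogonal_iff.1 hxM) m hm
  simp [hl', hm']

variable [FiniteDimensional K W]

lemma _root_.LinearMap.BilinForm.orthogonal_eq_self_of_isotropic (hB : B.Nondegenerate) {n : ℕ}
    (hW : Module.finrank K W = 2 * n) {L : Submodule K W} (hL : ∀ x ∈ L, ∀ y ∈ L, B x y = 0)
    (hLn : Module.finrank K L = n) : B.orthogonal L = L := by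
  refine (Submodule.eq_of_le_of_finrank_le (fun x hx => ?_) ?_).symm
  · exact B.mem_orthogonal_iff.2 fun y hy => hL y hy x hx
  · rw [LinearMap.BilinForm.finrank_orthogonal hB]
    omega

lemma _root_.LinearMap.BilinForm.orthogonal_inf_eq_sup (hB : B.Nondegenerate) (hB₀ : B.IsRefl)
    {L M : Submodule K W} (hL : B.orthogonal L = L) (hM : B.orthogonal M = M) :
    B.orthogonal (L ⊓ M) = L ⊔ M := by
  conv_lhs => rw [← hL, ← hM, ← B.orthogonal_sup, B.orthogonal_orthogonal hB hB₀]

end Lagrangian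

section Heisenberg

variable {F V}
variable (ω : LinearMap.BilinForm F V) (ψ : AddChar F ℂ)

lemma hMul_zero_left (h : V × F) : hMul F V ω (0, 0) h = h := by
  simp [hMul]

lemma hMul_center_comm (z : F) (h : V × F) : hMul F V ω h (0, z) = hMul F V ω (0, z) h := by
  simp [hMul, add_comm]

@[simp]
lemma heisAction_apply (L : Submodule F V) (h₀ : V × F) (f : model F V ω ψ L) (h : V × F) :
    (heisAction F V ω ψ L h₀ f : V × F → ℂ) h = (f : V × F → ℂ) (hMul F V ω h h₀) :=
  rfl

lemma heisAction_hMul (L : Submodule F V) (h h' : V × F) (f : model F V ω ψ L) :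
    heisAction F V ω ψ L (hMul F V ω h h') f
      = heisAction F V ω ψ L h (heisAction F V ω ψ L h' f) :=
  Subtype.ext <| funext fun p => by simp [hMul_assoc]

lemma heisAction_center (L : Submodule F V) (z : F) (f : model F V ω ψ L) :
    heisAction F V ω ψ L (0, z) f = ψ z • f :=
  Subtype.ext <| funext fun p => by
    simpa [hMul_center_comm] using f.2 0 L.zero_mem z p

lemma heisAction_heisAction (L : Submodule F V) (u v : V) (f : model F V ω ψ L) :
    heisAction F V ω ψ L (u, 0) (heisAction F V ω ψ L (v, 0) f)
      = ψ (2⁻¹ * ω u v) • heisAction F V ω ψ L (u + v, 0) f := by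
  rw [← heisAction_hMul, ← heisAction_center, ← heisAction_hMul]
  congr 1
  simp [hMul]

lemma heisAction_comm (hω : ω.IsAlt) (h2 : (2 : F) ≠ 0) (L : Submodule F V) (u v : V)
    (f : model F V ω ψ L) :
    heisAction F V ω ψ L (u, 0) (heisAction F V ω ψ L (v, 0) f)
      = ψ (ω u v) • heisAction F V ω ψ L (v, 0) (heisAction F V ω ψ L (u, 0) f) := by
  rw [heisAction_heisAction, heisAction_heisAction, smul_smul, ← AddChar.map_add_eq_mul,
    add_comm v u, ← hω.neg_eq u v]
  congr 2
  field_simp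
  ring

variable {L : Submodule F V} (hL : ∀ x ∈ L, ∀ y ∈ L, ω x y = 0)

def modelDelta : model F V ω ψ L :=
  ⟨fun p => if p.1 ∈ L then ψ p.2 else 0, by
    intro l hl z h
    by_cases hh : h.1 ∈ L
    · simp [hMul, hh, L.add_mem hl hh, hL l hl h.1 hh, AddChar.map_add_eq_mul]
    · simp [hMul, hh, (L.add_mem_iff_right hl).not.mpr hh]⟩

lemma modelDelta_apply (p : V × F) :
    (modelDelta ω ψ hL : V × F → ℂ) p = if p.1 ∈ L then ψ p.2 else 0 :=
  rfl

lemma heisAction_modelDelta_of_mem {l : V} (hl : l ∈ L) :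
    heisAction F V ω ψ L (l, 0) (modelDelta ω ψ hL) = modelDelta ω ψ hL := by
  refine Subtype.ext <| funext fun p => ?_
  by_cases hp : p.1 ∈ L
  · simp [modelDelta_apply, hMul, hp, L.add_mem hp hl, hL p.1 hp l hl]
  · simp [modelDelta_apply, hMul, hp, (L.add_mem_iff_left hl).not.mpr hp]

lemma heisAction_heisAction_modelDelta (hω : ω.IsAlt) (h2 : (2 : F) ≠ 0) {m : V} (hm : m ∈ L)
    (u : V) :
    heisAction F V ω ψ L (m, 0) (heisAction F V ω ψ L (u, 0) (modelDelta ω ψ hL))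
      = ψ (ω m u) • heisAction F V ω ψ L (u, 0) (modelDelta ω ψ hL) := by
  rw [heisAction_comm ω ψ hω h2, heisAction_modelDelta_of_mem ω ψ hL hm]

lemma card_smul_eq_sum_heisAction_modelDelta [Fintype V] (hω : ω.IsAlt)
    (f : model F V ω ψ L) :
    (Nat.card L : ℂ) • f
      = ∑ u : V, (f : V × F → ℂ) (u, 0) • heisAction F V ω ψ L (-u, 0) (modelDelta ω ψ hL) := by
  refine Subtype.ext <| funext fun ⟨v, z⟩ => ?_
  have hterm : ∀ u : V, (f : V × F → ℂ) (u, 0)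
      * (heisAction F V ω ψ L (-u, 0) (modelDelta ω ψ hL) : V × F → ℂ) (v, z)
      = (if v - u ∈ L then 1 else 0) * (f : V × F → ℂ) (v, z) := by
    intro u
    by_cases hu : v - u ∈ L
    · have hvz : hMul F V ω (v - u, z - 2⁻¹ * ω v u) (u, 0) = (v, z) := by
        simp [hMul, hω u]
      have hf := f.2 (v - u) hu (z - 2⁻¹ * ω v u) (u, 0)
      rw [hvz] at hf
      simp [modelDelta_apply, hMul, ← sub_eq_add_neg, hu, hf, mul_comm]
    · simp [modelDelta_apply, hMul, ← sub_eq_add_neg, hu]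
  have hcard : ∑ u : V, (if v - u ∈ L then (1 : ℂ) else 0) = Nat.card L := by
    rw [← Equiv.sum_comp (Equiv.subLeft v), Finset.sum_boole]
    simp [Nat.card_eq_fintype_card, Fintype.card_subtype]
  simp only [SetLike.val_smul, Pi.smul_apply, smul_eq_mul, Submodule.coe_sum, Finset.sum_apply]
  rw [Finset.sum_congr rfl fun u _ => hterm u, ← Finset.sum_mul, hcard]

variable (L) in
def invariantFunctionals (M : Submodule F V) :
    Submodule ℂ (Module.Dual ℂ (model F V ω ψ L)) where
  carrier := {δ | ∀ m ∈ M, ∀ f, δ (heisAction F V ω ψ L (m, 0) f) = δ f}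
  add_mem' hδ hδ' m hm f := by simp [hδ m hm f, hδ' m hm f]
  zero_mem' _ _ _ := rfl
  smul_mem' c δ hδ m hm f := by simp [hδ m hm f]

variable {M : Submodule F V} {δ : Module.Dual ℂ (model F V ω ψ L)}

lemma apply_heisAction_modelDelta_of_mem_sup (hδ : δ ∈ invariantFunctionals ω ψ L M)
    (hδΔ : δ (modelDelta ω ψ hL) = 0) {u : V} (hu : u ∈ M ⊔ L) :
    δ (heisAction F V ω ψ L (u, 0) (modelDelta ω ψ hL)) = 0 := by
  obtain ⟨m, hm, l, hl, rfl⟩ := Submodule.mem_sup.1 hu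
  have htrans := heisAction_heisAction ω ψ L m l (modelDelta ω ψ hL)
  rw [heisAction_modelDelta_of_mem ω ψ hL hl] at htrans
  rw [← smul_eq_zero_iff_right (ψ.val_isUnit _).ne_zero, ← map_smul, ← htrans, hδ m hm, hδΔ]

lemma apply_heisAction_modelDelta_of_not_mem_orthogonal (hψ : ψ ≠ 1) (hω : ω.IsAlt)
    (h2 : (2 : F) ≠ 0) (hδ : δ ∈ invariantFunctionals ω ψ L M) {u : V}
    (hu : u ∉ ω.orthogonal (M ⊓ L)) :
    δ (heisAction F V ω ψ L (u, 0) (modelDelta ω ψ hL)) = 0 := by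
  obtain ⟨m, hmM, hmL, hmu⟩ : ∃ m ∈ M, m ∈ L ∧ ω m u ≠ 0 := by
    simpa using hu
  obtain ⟨x, hx⟩ : ∃ x : F, ψ (ω m u * x) ≠ 1 := by
    simpa [DFunLike.ne_iff] using AddChar.IsPrimitive.of_ne_one hψ hmu
  have heig := congrArg δ
    (heisAction_heisAction_modelDelta ω ψ hL hω h2 (L.smul_mem x hmL) u)
  rw [hδ _ (M.smul_mem x hmM), map_smul, smul_eq_mul, map_smul, LinearMap.smul_apply,
    smul_eq_mul, mul_comm x] at heig
  by_contra hne
  exact hx ((mul_eq_right₀ hne).1 heig.symm)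

theorem eq_zero_of_mem_invariantFunctionals [Fintype V] (hψ : ψ ≠ 1) (hω : ω.IsAlt)
    (h2 : (2 : F) ≠ 0) (hML : ω.orthogonal (M ⊓ L) ≤ M ⊔ L)
    (hδ : δ ∈ invariantFunctionals ω ψ L M) (hδΔ : δ (modelDelta ω ψ hL) = 0) : δ = 0 := by
  have htrans (u : V) : δ (heisAction F V ω ψ L (u, 0) (modelDelta ω ψ hL)) = 0 := by
    by_cases hu : u ∈ ω.orthogonal (M ⊓ L)
    · exact apply_heisAction_modelDelta_of_mem_sup ω ψ hL hδ hδΔ (hML hu)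
    · exact apply_heisAction_modelDelta_of_not_mem_orthogonal ω ψ hL hψ hω h2 hδ hu
  ext f
  have hcard : (Nat.card L : ℂ) ≠ 0 := Nat.cast_ne_zero.2 Nat.card_pos.ne'
  rw [LinearMap.zero_apply, ← smul_eq_zero_iff_right hcard, ← map_smul,
    card_smul_eq_sum_heisAction_modelDelta ω ψ hL hω, map_sum]
  exact Finset.sum_eq_zero fun u _ => by rw [map_smul, htrans, smul_zero]

variable (L M) in
def averaging [Fintype M] : Module.Dual ℂ (model F V ω ψ L) where
  toFun f := ∑ m : M, (f : V × F → ℂ) ((m : V), 0)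
  map_add' f g := by simp [Finset.sum_add_distrib]
  map_smul' c f := by simp [Finset.mul_sum]

lemma averaging_mem_invariantFunctionals [Fintype M] (hM : ∀ x ∈ M, ∀ y ∈ M, ω x y = 0) :
    averaging ω ψ L M ∈ invariantFunctionals ω ψ L M := by
  intro m hm f
  simp only [averaging, LinearMap.coe_mk, AddHom.coe_mk, heisAction_apply]
  rw [← Equiv.sum_comp (Equiv.addRight (⟨m, hm⟩ : M)) (fun m' : M => (f : V × F → ℂ) (m', 0))]
  refine Finset.sum_congr rfl fun m' _ => ?_
  simp [hMul, hM m' m'.2 m hm]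

lemma averaging_modelDelta_ne_zero [Fintype M] :
    averaging ω ψ L M (modelDelta ω ψ hL) ≠ 0 := by
  simp only [averaging, LinearMap.coe_mk, AddHom.coe_mk, modelDelta_apply,
    AddChar.map_zero_eq_one, Finset.sum_boole]
  exact Nat.cast_ne_zero.2 (Finset.card_ne_zero.2 ⟨0, by simp [L.zero_mem]⟩)

theorem eq_smul_averaging_of_mem_invariantFunctionals [Fintype V] [Fintype M] (hψ : ψ ≠ 1)
    (hω : ω.IsAlt) (h2 : (2 : F) ≠ 0) (hM : ∀ x ∈ M, ∀ y ∈ M, ω x y = 0)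
    (hML : ω.orthogonal (M ⊓ L) ≤ M ⊔ L) (hδ : δ ∈ invariantFunctionals ω ψ L M) :
    δ = (δ (modelDelta ω ψ hL) / averaging ω ψ L M (modelDelta ω ψ hL)) • averaging ω ψ L M := by
  refine sub_eq_zero.1 (eq_zero_of_mem_invariantFunctionals ω ψ hL hψ hω h2 hML
    (sub_mem hδ (Submodule.smul_mem _ _ (averaging_mem_invariantFunctionals ω ψ hM))) ?_)
  rw [LinearMap.sub_apply, LinearMap.smul_apply, smul_eq_mul,
    div_mul_cancel₀ _ (averaging_modelDelta_ne_zero ω ψ hL), sub_self]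

variable (M) in
def evalOne : Module.Dual ℂ (model F V ω ψ M) :=
  (LinearMap.proj ((0 : V), (0 : F))).comp (model F V ω ψ M).subtype

variable {T : model F V ω ψ L →ₗ[ℂ] model F V ω ψ M}

lemma intertwiner_apply (hT : T ∈ intertwiners F V ω ψ M L) (f : model F V ω ψ L) (h : V × F) :
    (T f : V × F → ℂ) h = evalOne ω ψ M (T (heisAction F V ω ψ L h f)) := by
  rw [← LinearMap.comp_apply T, hT h]
  simp [evalOne, hMul_zero_left]

lemma evalOne_comp_mem_invariantFunctionals (hT : T ∈ intertwiners F V ω ψ M L) :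
    evalOne ω ψ M ∘ₗ T ∈ invariantFunctionals ω ψ L M := by
  intro m hm f
  rw [LinearMap.comp_apply, ← intertwiner_apply ω ψ hT]
  simpa [evalOne, hMul] using (T f).2 m hm 0 (0, 0)

end Heisenberg

/-- Every intertwining operator `T ∈ Hom_{H(V,ω)}(H_{L°}, H_{M°})` is proportional to
the averaging operator: there is `g_T ∈ ℂ` with
`T(f)(h) = g_T · Σ_{m ∈ M} f((m,0)·h)` for all `f ∈ H_{L°}` and `h ∈ H`. -/
theorem intertwiner_proportional_to_averaging
    (n : ℕ) [FiniteDimensional F V] [Fintype V] (hdim : Module.finrank F V = 2 * n)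
    (hq : Odd (Fintype.card F))
    (ω : LinearMap.BilinForm F V)
    (halt : ∀ v : V, ω v v = 0)
    (hnd : ∀ v : V, (∀ u : V, ω v u = 0) → v = 0)
    (ψ : AddChar F ℂ) (hψ : ψ ≠ 1)
    (Lo Mo : EnhLag F V ω n)
    (T : ↥(model F V ω ψ Lo.L) →ₗ[ℂ] ↥(model F V ω ψ Mo.L))
    (hT : T ∈ intertwiners F V ω ψ Mo.L Lo.L) :
    ∃ c : ℂ, ∀ (f : ↥(model F V ω ψ Lo.L)) (h : V × F),
      (T f : (V × F) → ℂ) h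
        = c * ∑ m : ↥Mo.L, (f : (V × F) → ℂ) (hMul F V ω ((m : V), (0 : F)) h) := by
  have hω : ω.IsAlt := halt
  have h2 : (2 : F) ≠ 0 := Ring.two_ne_zero fun hchar => by
    have := FiniteField.even_card_of_char_two hchar
    rw [Nat.odd_iff] at hq
    omega
  have hnd' : ω.Nondegenerate := hω.isRefl.nondegenerate_iff_separatingLeft.2 hnd
  have hML : ω.orthogonal (Mo.L ⊓ Lo.L) ≤ Mo.L ⊔ Lo.L :=
    (ω.orthogonal_inf_eq_sup hnd' hω.isRefl
      (ω.orthogonal_eq_self_of_isotropic hnd' hdim Mo.isotropic Mo.dim)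
      (ω.orthogonal_eq_self_of_isotropic hnd' hdim Lo.isotropic Lo.dim)).le
  obtain ⟨c, hc⟩ : ∃ c : ℂ, evalOne ω ψ Mo.L ∘ₗ T = c • averaging ω ψ Lo.L Mo.L :=
    ⟨_, eq_smul_averaging_of_mem_invariantFunctionals ω ψ Lo.isotropic hψ hω h2 Mo.isotropic
      hML (evalOne_comp_mem_invariantFunctionals ω ψ hT)⟩
  refine ⟨c, fun f h => ?_⟩
  rw [intertwiner_apply ω ψ hT, ← LinearMap.comp_apply, hc]
  rfl

end KRSup
end
end

section
/- The isomorphism class of the Heisenberg representation is fixed by the symplectic group: if (π, H) is an irreducible complex representation of the Heisenberg group H(V,ω) with central character ψ, then for every g ∈ Sp(V,ω) the representation π ∘ g (where g acts on H(V,ω) by g·(v,z) = (gv,z)) is isomorphic to π. -/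
/-!
For `v ≠ 0` the trace of `π (v, z)` vanishes: `(u, 0) * (v - u, t)` and `(v - u, t) * (u, 0)`
have the same trace and differ only by `ω u v` in the central coordinate, which by
nondegeneracy can be any `c`, while moving the central coordinate by `c` multiplies `π` by
`ψ c ≠ 1`. Hence the character of an irreducible representation with central character `ψ`
depends only on its dimension, so `π ∘ g` and `π` have the same character and, being
irreducible representations of a finite group, are isomorphic.
-/

noncomputable section
set_option linter.unusedSectionVars false

namespace KRSup

variable (F V : Type) [Field F] [Fintype F] [AddCommGroup V] [Module F V]

/-- The symplectic group `Sp(V,ω)` of linear automorphisms preserving `ω`. -/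
def Symp (ω : LinearMap.BilinForm F V) : Subgroup (V ≃ₗ[F] V) where
  carrier := {g | ∀ u v : V, ω (g u) (g v) = ω u v}
  mul_mem' := by
    intro g h hg hh u v
    simpa using (hg (h u) (h v)).trans (hh u v)
  one_mem' := by intro u v; rfl
  inv_mem' := by
    intro g hg u v
    conv_rhs => rw [← g.apply_symm_apply u, ← g.apply_symm_apply v, hg]
    rfl

end KRSup

theorem FiniteField.two_ne_zero_of_odd_card {F : Type*} [Field F] [Fintype F]
    (hq : Odd (Fintype.card F)) : (2 : F) ≠ 0 :=
  Ring.two_ne_zero fun h ↦ by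
    simp [Nat.odd_iff, FiniteField.even_card_of_char_two h] at hq

theorem LinearMap.SeparatingRight.exists_apply_eq {K M N : Type*} [Field K] [AddCommGroup M]
    [Module K M] [AddCommGroup N] [Module K N] {B : M →ₗ[K] N →ₗ[K] K}
    (hB : B.SeparatingRight) {y : N} (hy : y ≠ 0) (c : K) : ∃ x, B x y = c := by
  obtain ⟨x, hx⟩ : ∃ x, B x y ≠ 0 := by
    by_contra! h
    exact hy (hB y h)
  exact ⟨(c / B x y) • x, by simp [hx]⟩

theorem Representation.nonempty_equiv_of_character_eq {G k V W : Type*} [Group G] [Fintype G]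
    [Field k] [IsAlgClosed k] [Invertible (Nat.card G : k)] [AddCommGroup V] [Module k V]
    [FiniteDimensional k V] [AddCommGroup W] [Module k W] [FiniteDimensional k W]
    {ρ : Representation k G V} {σ : Representation k G W} [ρ.IsIrreducible] [σ.IsIrreducible]
    (h : ρ.character = σ.character) : Nonempty (ρ.Equiv σ) := by
  classical
  by_contra hne
  have hσρ := char_orthonormal σ ρ
  rw [← h, char_orthonormal ρ ρ, if_pos ⟨.refl ρ⟩, if_neg hne] at hσρ
  simp at hσρ

namespace KRSup

section

variable {F V : Type} [Field F] [Fintype F] [AddCommGroup V] [Module F V]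
  {ω : LinearMap.BilinForm F V} {ψ : AddChar F ℂ}

/-- `V × F` under `hMul`: a type synonym indexed by `ω`, so that the law can be an instance. -/
def Heis (_ω : LinearMap.BilinForm F V) : Type := V × F

instance : Group (Heis ω) where
  mul := hMul F V ω
  one := ((0 : V), (0 : F))
  inv h := (-h.1, -h.2 + (2 : F)⁻¹ * ω h.1 h.1)
  mul_assoc a b c := by
    change hMul F V ω (hMul F V ω a b) c = hMul F V ω a (hMul F V ω b c)
    refine Prod.ext (add_assoc _ _ _) ?_
    simp only [hMul, map_add, LinearMap.add_apply]
    ring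
  one_mul a := by
    change hMul F V ω (0, 0) a = a
    simp [hMul]
    rfl
  mul_one a := by
    change hMul F V ω a (0, 0) = a
    simp [hMul]
    rfl
  inv_mul_cancel a := by
    change hMul F V ω (-a.1, -a.2 + (2 : F)⁻¹ * ω a.1 a.1) a = (0, 0)
    refine Prod.ext (neg_add_cancel a.1) ?_
    simp only [hMul, map_neg, LinearMap.neg_apply]
    ring

instance [Fintype V] : Fintype (Heis ω) := inferInstanceAs (Fintype (V × F))

namespace HeisenbergRep

variable (P : HeisenbergRep F V ω ψ)

def toRepresentation : Representation ℂ (Heis ω) P.carrier where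
  toFun := P.π
  map_one' := P.π_one
  map_mul' := P.π_mul

instance : P.toRepresentation.IsIrreducible where
  exists_pair_ne := by
    obtain ⟨w, hw⟩ := P.nontriv
    refine ⟨⊥, ⊤, fun h ↦ hw ?_⟩
    have hw' : w ∈ (⊥ : Subrepresentation P.toRepresentation) := h ▸ Submodule.mem_top
    exact (Submodule.mem_bot ℂ).1 hw'
  eq_bot_or_eq_top U :=
    (P.irred U.toSubmodule fun h _ hw ↦ U.apply_mem_toSubmodule h hw).imp
      (fun hU ↦ Subrepresentation.toSubmodule_injective hU)
      (fun hU ↦ Subrepresentation.toSubmodule_injective hU)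

theorem π_mk_add (v : V) (z c : F) : P.π (v, z + c) = ψ c • P.π (v, z) := by
  have h := P.π_mul (v, z) (0, c)
  simp only [hMul, add_zero, map_zero, mul_zero, P.central] at h
  rw [h, LinearMap.comp_smul, LinearMap.comp_id]

theorem trace_π_add_apply (hω : LinearMap.IsAlt ω) (h2 : (2 : F) ≠ 0) (u v : V) (z : F) :
    LinearMap.trace ℂ P.carrier (P.π (v, z + ω u v)) =
      LinearMap.trace ℂ P.carrier (P.π (v, z)) := by
  have h := LinearMap.trace_mul_comm ℂ (P.π (u, 0)) (P.π (v - u, z + 2⁻¹ * ω u v))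
  simp only [Module.End.mul_eq_comp, ← P.π_mul, hMul] at h
  convert h using 4
  · simp only [add_sub_cancel]
  · simp only [map_sub, hω.self_eq_zero]
    field_simp
    ring
  · simp only [sub_add_cancel]
  · simp only [map_sub, LinearMap.sub_apply, hω.self_eq_zero, ← hω.neg u v]
    ring

theorem trace_π_eq_zero (hω : LinearMap.IsAlt ω) (hsep : LinearMap.SeparatingRight ω)
    (h2 : (2 : F) ≠ 0) (hψ : ψ ≠ 1) {v : V} (hv : v ≠ 0) (z : F) :
    LinearMap.trace ℂ P.carrier (P.π (v, z)) = 0 := by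
  obtain ⟨c, hc⟩ := AddChar.ne_one_iff.1 hψ
  obtain ⟨u, rfl⟩ := hsep.exists_apply_eq hv c
  have h := P.trace_π_add_apply hω h2 u v z
  rw [P.π_mk_add, map_smul, smul_eq_mul] at h
  by_contra htr
  exact hc ((mul_eq_right₀ htr).1 h)

theorem trace_π_center (z : F) :
    LinearMap.trace ℂ P.carrier (P.π (0, z)) = ψ z * Module.finrank ℂ P.carrier := by
  rw [P.central, map_smul, LinearMap.trace_id, smul_eq_mul]

theorem character_eq (hω : LinearMap.IsAlt ω) (hsep : LinearMap.SeparatingRight ω)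
    (h2 : (2 : F) ≠ 0) (hψ : ψ ≠ 1) {Q : HeisenbergRep F V ω ψ}
    (hPQ : Module.finrank ℂ P.carrier = Module.finrank ℂ Q.carrier) :
    P.toRepresentation.character = Q.toRepresentation.character := by
  funext h
  obtain ⟨v, z⟩ := h
  change LinearMap.trace ℂ P.carrier (P.π (v, z)) = LinearMap.trace ℂ Q.carrier (Q.π (v, z))
  rcases eq_or_ne v 0 with rfl | hv
  · rw [P.trace_π_center, Q.trace_π_center, hPQ]
  · rw [P.trace_π_eq_zero hω hsep h2 hψ hv, Q.trace_π_eq_zero hω hsep h2 hψ hv]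

def twist (g : Symp F V ω) : HeisenbergRep F V ω ψ where
  carrier := P.carrier
  π h := P.π ((g : V ≃ₗ[F] V) h.1, h.2)
  π_mul h h' := by
    have h_mul := P.π_mul ((g : V ≃ₗ[F] V) h.1, h.2) ((g : V ≃ₗ[F] V) h'.1, h'.2)
    simpa [hMul, g.2 h.1 h'.1] using h_mul
  π_one := by simpa using P.π_one
  nontriv := P.nontriv
  central z := by simpa using P.central z
  irred U hU := P.irred U fun h ↦ by simpa using hU ((g : V ≃ₗ[F] V).symm h.1, h.2)

end HeisenbergRep

end

variable (F V : Type) [Field F] [Fintype F] [AddCommGroup V] [Module F V]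

theorem heisenberg_rep_class_fixed_by_symplectic_group
    [FiniteDimensional F V]
    (hq : Odd (Fintype.card F))
    (ω : LinearMap.BilinForm F V)
    (halt : ∀ v : V, ω v v = 0)
    (hnd : ∀ v : V, (∀ u : V, ω v u = 0) → v = 0)
    (ψ : AddChar F ℂ) (hψ : ψ ≠ 1)
    (P : HeisenbergRep F V ω ψ)
    (g : ↥(Symp F V ω)) :
    ∃ e : P.carrier ≃ₗ[ℂ] P.carrier,
      ∀ (v : V) (z : F) (w : P.carrier),
        e (P.π ((g : V ≃ₗ[F] V) v, z) w) = P.π (v, z) (e w) := by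
  have h2 := FiniteField.two_ne_zero_of_odd_card hq
  have hsep : LinearMap.SeparatingRight ω :=
    ((LinearMap.IsAlt.isRefl halt).nondegenerate_iff_separatingLeft.2 hnd).2
  have : Finite V := Module.finite_of_finite F
  have : Fintype V := Fintype.ofFinite V
  have : Invertible (Nat.card (Heis ω) : ℂ) :=
    invertibleOfNonzero (Nat.cast_ne_zero.2 Nat.card_pos.ne')
  obtain ⟨e⟩ := Representation.nonempty_equiv_of_character_eq
    ((P.twist g).character_eq halt hsep h2 hψ (Q := P) rfl)
  exact ⟨e.toLinearEquiv, fun v z w ↦ e.toIntertwiningMap.isIntertwining _ _ (v, z) w⟩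

end KRSup
end
end
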